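/- Let f : ℝ^d → ℝ be L₁-smooth with L₂-Lipschitz Hessian, and suppose ∇²f(x₀) ⪰ -αI for some α ≥ 0 and point x₀. Then the function f_α(x) = f(x) + L₁·(max(‖x - x₀‖ - α/L₂, 0))² is 3α-almost convex, i.e., f_α(y) - f_α(x) - ⟨∇f_α(x), y - x⟩ ≥ -(3α/2)‖y - x‖² for all x, y, and ∇f_α is 5L₁-Lipschitz. -/

import Mathlib

/-
Every point of the segment `[x, y]` lies within `M = max ‖x - x₀‖ ‖y - x₀‖` of `x₀`, where the
Hessian of `f` is bounded below by `-min L₁ (α + L₂ M)`; so the Bregman divergence of `f` is at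
least `-(min L₁ (α + L₂ M) / 2) ‖y - x‖²`. The penalty is `L₁` times the squared distance to the
ball of radius `r = α / L₂` about `x₀`: a convex function whose Bregman divergence is moreover at
least `(M - 2r) / (2 (M + r)) ‖y - x‖²` once `M ≥ 2r`, which pays for the curvature deficit
beyond `3α`. Its gradient `2 L₁ (p - proj p)` is `2 L₁`-Lipschitz, because the residual of the
projection onto a convex set is nonexpansive.
-/

open scoped RealInnerProductSpace
open Set

lemma neg_half_le_sub_sub_of_deriv2_ge {φ φ₁ φ₂ : ℝ → ℝ} {K : ℝ}
    (hφ : ∀ t, HasDerivAt φ (φ₁ t) t) (hφ₁ : ∀ t, HasDerivAt φ₁ (φ₂ t) t)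
    (hK : ∀ t ∈ Ioo (0 : ℝ) 1, -K ≤ φ₂ t) :
    -(K / 2) ≤ φ 1 - φ 0 - φ₁ 0 := by
  -- `φ t + K t² / 2 - (φ₁ 0) t` has a derivative vanishing at `0` and increasing on `[0, 1]`
  have hψ₁ : ∀ t, HasDerivAt (fun s => φ₁ s + K * s) (φ₂ t + K) t := fun t =>
    ((hφ₁ t).fun_add ((hasDerivAt_id' t).const_mul K)).congr_deriv (by ring)
  have hψ : ∀ t, HasDerivAt (fun s => φ s + K * s ^ 2 / 2 - φ₁ 0 * s)
      (φ₁ t + K * t - φ₁ 0) t := fun t =>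
    (((hφ t).fun_add (((hasDerivAt_pow 2 t).const_mul K).div_const 2)).fun_sub
      ((hasDerivAt_id' t).const_mul (φ₁ 0))).congr_deriv (by norm_num; ring)
  have hmono₁ : MonotoneOn (fun s => φ₁ s + K * s) (Icc 0 1) :=
    monotoneOn_of_deriv_nonneg (convex_Icc 0 1)
      (HasDerivAt.continuousOn fun t _ => hψ₁ t)
      (fun t _ => (hψ₁ t).differentiableAt.differentiableWithinAt)
      (fun t ht => by
        rw [interior_Icc] at ht
        rw [(hψ₁ t).deriv]; linarith [hK t ht])
  have hmono : MonotoneOn (fun s => φ s + K * s ^ 2 / 2 - φ₁ 0 * s) (Icc 0 1) :=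
    monotoneOn_of_deriv_nonneg (convex_Icc 0 1)
      (HasDerivAt.continuousOn fun t _ => hψ t)
      (fun t _ => (hψ t).differentiableAt.differentiableWithinAt)
      (fun t ht => by
        rw [interior_Icc] at ht
        have := hmono₁ (left_mem_Icc.2 zero_le_one) (Ioo_subset_Icc_self ht) ht.1.le
        rw [(hψ t).deriv]; simp only at this; linarith)
  have := hmono (left_mem_Icc.2 zero_le_one) (right_mem_Icc.2 zero_le_one) zero_le_one
  simp only at this
  linarith

lemma max_sub_zero_div_mul_self {r s : ℝ} (hr : 0 ≤ r) (hs : 0 ≤ s) :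
    max (s - r) 0 / s * s = max (s - r) 0 := by
  rcases hs.eq_or_lt with rfl | hs
  · simp [hr]
  · exact div_mul_cancel₀ _ hs.ne'

lemma max_sub_zero_div_self_mem_Icc {r s : ℝ} (hr : 0 ≤ r) (hs : 0 ≤ s) :
    max (s - r) 0 / s ∈ Icc (0 : ℝ) 1 :=
  ⟨div_nonneg (le_max_right _ _) hs, div_le_one_of_le₀ (max_le (by linarith) hs) hs⟩

/- The lower bound on the Bregman divergence of `‖ballResidual r ·‖ ^ 2` in scalar form, with
`a = ‖p‖`, `b = ‖q‖` and `u = ‖p‖ ‖q‖ - ⟪p, q⟫`. -/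
lemma mul_sq_add_le_of_two_mul_le_max {r a b u : ℝ} (hr : 0 ≤ r) (ha : 0 ≤ a) (hb : 0 ≤ b)
    (hu₀ : 0 ≤ u) (hu : u ≤ 2 * a * b) (hM : 2 * r ≤ max a b) :
    (max a b - 2 * r) * ((b - a) ^ 2 + 2 * u)
      ≤ 2 * (max a b + r)
        * ((max (b - r) 0 - max (a - r) 0) ^ 2 + 2 * (max (a - r) 0 / a) * u) := by
  rcases le_or_gt a r with har | hra
  · have hab : a ≤ b := by
      by_contra! hba
      rw [max_eq_left hba.le] at hM
      linarith
    rw [max_eq_right hab] at hM ⊢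
    rw [max_eq_right (by linarith : a - r ≤ 0), max_eq_left (by linarith : 0 ≤ b - r),
      zero_div, mul_zero, zero_mul, add_zero, sub_zero]
    have hV : (b - a) ^ 2 + 2 * u ≤ (b + r) ^ 2 := by nlinarith
    nlinarith [mul_le_mul_of_nonneg_left hV (by linarith : 0 ≤ b - 2 * r),
      mul_nonneg (by linarith : 0 ≤ b + r) (by nlinarith : 0 ≤ b ^ 2 - 3 * r * b + 4 * r ^ 2)]
  have ha : 0 < a := hr.trans_lt hra
  rw [max_eq_left (by linarith : 0 ≤ a - r)]
  refine le_of_mul_le_mul_left ?_ ha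
  rw [show a * (2 * (max a b + r) * ((max (b - r) 0 - (a - r)) ^ 2 + 2 * ((a - r) / a) * u))
      = 2 * (max a b + r) * (a * (max (b - r) 0 - (a - r)) ^ 2 + 2 * (a - r) * u) by
    field_simp]
  rcases le_or_gt b r with hbr | hrb
  · rw [max_eq_left (by linarith : b ≤ a)] at hM ⊢
    rw [max_eq_right (by linarith : b - r ≤ 0), zero_sub, neg_sq]
    have hV : (b - a) ^ 2 ≤ a ^ 2 := by nlinarith
    nlinarith [mul_le_mul_of_nonneg_left hV (by nlinarith : 0 ≤ a * (a - 2 * r)),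
      mul_nonneg ha.le (by nlinarith [mul_nonneg hr (sq_nonneg (a - r))] :
        0 ≤ a * (a ^ 2 - 2 * r ^ 2) + 2 * r ^ 3),
      mul_nonneg hu₀ (by nlinarith : 0 ≤ 2 * a ^ 2 + 4 * a * r - 4 * r ^ 2)]
  rw [max_eq_left (by linarith : 0 ≤ b - r), sub_sub_sub_cancel_right]
  rcases le_total b a with hba | hab
  · rw [max_eq_left hba] at hM ⊢
    nlinarith [mul_nonneg (mul_nonneg ha.le (by linarith : 0 ≤ a + 4 * r)) (sq_nonneg (b - a)),
      mul_nonneg hu₀ (by nlinarith : 0 ≤ 2 * a ^ 2 + 4 * a * r - 4 * r ^ 2)]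
  rw [max_eq_right hab] at hM ⊢
  -- `G u := rhs - lhs` is affine in `u ∈ [0, 2ab]`: `2ab G u = (2ab - u) G 0 + u G (2ab)`, where
  -- `G 0 = a (b + 4r) (b - a) ^ 2` and `G (2ab)` is `a` times the expression in `hH`
  have hH :
      0 ≤ (b + 4 * r) * (b - a) ^ 2 + 4 * b * (a * b + 4 * a * r - 2 * b * r - 2 * r ^ 2) := by
    nlinarith [mul_nonneg hb (sq_nonneg (b - r)), pow_nonneg hr 3,
      mul_nonneg (mul_nonneg hr hb) (by linarith : 0 ≤ a - r),
      mul_nonneg hr (by nlinarith : 0 ≤ a ^ 2 - r ^ 2),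
      mul_nonneg hb (by nlinarith : 0 ≤ (b + a) ^ 2 - (b + r) ^ 2)]
  have hP : 0 ≤ (2 * a * b - u) * (a * (b + 4 * r) * (b - a) ^ 2) :=
    mul_nonneg (by linarith) (mul_nonneg (mul_nonneg ha.le (by linarith)) (sq_nonneg _))
  refine le_of_mul_le_mul_left ?_ (by nlinarith : 0 < 2 * a * b)
  nlinarith [mul_nonneg (mul_nonneg hu₀ ha.le) hH]

lemma min_mul_le_of_bregman_ge {L₁ L₂ α r M V B : ℝ} (hL₁ : 0 ≤ L₁) (hL₂ : 0 ≤ L₂) (hr : 0 ≤ r)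
    (hα : α = L₂ * r) (hM : 0 ≤ M) (hV : 0 ≤ V) (hB₀ : 0 ≤ B)
    (hB : 2 * r ≤ M → (M - 2 * r) * V ≤ 2 * (M + r) * B) :
    min L₁ (α + L₂ * M) * V ≤ 3 * α * V + 2 * L₁ * B := by
  subst hα
  set c := min L₁ (L₂ * r + L₂ * M)
  have hc₀ : 0 ≤ c := le_min hL₁ (by positivity)
  have hcL₁ : c * B ≤ L₁ * B := mul_le_mul_of_nonneg_right (min_le_left _ _) hB₀
  have hcM : c ≤ L₂ * (M + r) := (min_le_right _ _).trans_eq (by ring)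
  have hcMV := mul_le_mul_of_nonneg_right hcM hV
  rcases le_or_gt M (2 * r) with hMr | hMr
  · nlinarith [mul_le_mul_of_nonneg_left hMr (mul_nonneg hL₂ hV)]
  -- `c (M + r) V = c (M - 2r) V + 3 c r V`: the first part is paid by `B`, the second by `3α V`
  have hcB : (M + r) * (c * V) ≤ (M + r) * (2 * c * B + 3 * (L₂ * r) * V) := by
    nlinarith [mul_le_mul_of_nonneg_left (hB hMr.le) hc₀, mul_le_mul_of_nonneg_left hcMV hr]
  nlinarith [le_of_mul_le_mul_left hcB (by linarith : 0 < M + r)]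

section

variable {E : Type*} [NormedAddCommGroup E] [InnerProductSpace ℝ E] {r : ℝ}

lemma neg_opNorm_mul_sq_le_inner_apply (A : E →L[ℝ] E) (w : E) : -(‖A‖ * ‖w‖ ^ 2) ≤ ⟪w, A w⟫ := by
  have := (abs_real_inner_le_norm w (A w)).trans
    (mul_le_mul_of_nonneg_left (A.le_opNorm w) (norm_nonneg w))
  linarith [neg_abs_le ⟪w, A w⟫]

lemma neg_min_mul_sq_le_inner_apply {A B : E →L[ℝ] E} {L α δ : ℝ} (hA : ‖A‖ ≤ L)
    (hAB : ‖A - B‖ ≤ δ) (hB : ∀ v, ⟪v, B v⟫ ≥ -α * ‖v‖ ^ 2) (w : E) :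
    -min L (α + δ) * ‖w‖ ^ 2 ≤ ⟪w, A w⟫ := by
  have hAw : ⟪w, A w⟫ = ⟪w, B w⟫ + ⟪w, (A - B) w⟫ := by
    rw [← inner_add_right, sub_apply, add_sub_cancel]
  have hw := sq_nonneg ‖w‖
  have h₁ := neg_opNorm_mul_sq_le_inner_apply A w
  have h₂ := neg_opNorm_mul_sq_le_inner_apply (A - B) w
  rcases min_choice L (α + δ) with h | h <;> rw [h] <;> nlinarith [hB w]

lemma neg_half_mul_sq_le_sub_sub_inner_of_hessian_ge [CompleteSpace E] {f : E → ℝ} {f' : E → E}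
    {f'' : E → E →L[ℝ] E} (hf : ∀ x, HasGradientAt f (f' x) x)
    (hf' : ∀ x, HasFDerivAt f' (f'' x) x) {x y : E} {K : ℝ}
    (hK : ∀ z ∈ segment ℝ x y, -K * ‖y - x‖ ^ 2 ≤ ⟪y - x, f'' z (y - x)⟫) :
    -(K / 2) * ‖y - x‖ ^ 2 ≤ f y - f x - ⟪f' x, y - x⟫ := by
  set v := y - x
  have hline : ∀ t : ℝ, HasDerivAt (fun s : ℝ => x + s • v) v t := fun t => by
    simpa using ((hasDerivAt_id t).smul_const v).const_add x
  have hφ : ∀ t : ℝ, HasDerivAt (fun s => f (x + s • v)) ⟪f' (x + t • v), v⟫ t := fun t => by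
    have h := (hf (x + t • v)).hasFDerivAt.comp_hasDerivAt t (hline t)
    rwa [InnerProductSpace.toDual_apply_apply] at h
  have hφ₁ : ∀ t : ℝ, HasDerivAt (fun s => ⟪f' (x + s • v), v⟫) ⟪f'' (x + t • v) v, v⟫ t :=
    fun t => by
      simpa using ((hf' (x + t • v)).comp_hasDerivAt t (hline t)).inner ℝ (hasDerivAt_const t v)
  have hseg : ∀ t ∈ Ioo (0 : ℝ) 1, -(K * ‖v‖ ^ 2) ≤ ⟪f'' (x + t • v) v, v⟫ := fun t ht => by
    rw [real_inner_comm, ← neg_mul]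
    exact hK _ (segment_eq_image' ℝ x y ▸ mem_image_of_mem _ (Ioo_subset_Icc_self ht))
  have := neg_half_le_sub_sub_of_deriv2_ge hφ hφ₁ hseg
  simp only [one_smul, zero_smul, add_zero, v, add_sub_cancel] at this
  linarith

lemma neg_half_min_mul_sq_le_sub_sub_inner [CompleteSpace E] {f : E → ℝ} {f' : E → E}
    {f'' : E → E →L[ℝ] E} {L₁ L₂ α : ℝ} {x₀ : E} (hL₁ : 0 ≤ L₁) (hL₂ : 0 ≤ L₂)
    (hgrad : ∀ x, HasGradientAt f (f' x) x) (hgradlip : ∀ x y, ‖f' x - f' y‖ ≤ L₁ * ‖x - y‖)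
    (hhess : ∀ x, HasFDerivAt f' (f'' x) x) (hhesslip : ∀ x y, ‖f'' x - f'' y‖ ≤ L₂ * ‖x - y‖)
    (hpsd : ∀ v, ⟪v, f'' x₀ v⟫ ≥ -α * ‖v‖ ^ 2) (x y : E) :
    -(min L₁ (α + L₂ * max ‖x - x₀‖ ‖y - x₀‖) / 2) * ‖y - x‖ ^ 2
      ≤ f y - f x - ⟪f' x, y - x⟫ := by
  refine neg_half_mul_sq_le_sub_sub_inner_of_hessian_ge hgrad hhess fun z hz => ?_
  have hz₀ : ‖z - x₀‖ ≤ max ‖x - x₀‖ ‖y - x₀‖ := by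
    simpa only [dist_eq_norm] using
      (convexOn_univ_dist x₀).le_on_segment (mem_univ x) (mem_univ y) hz
  refine neg_min_mul_sq_le_inner_apply ?_ ?_ hpsd (y - x)
  · exact (hhess z).le_of_lip' hL₁ (Filter.Eventually.of_forall fun w => hgradlip w z)
  · exact (hhesslip z x₀).trans (mul_le_mul_of_nonneg_left hz₀ hL₂)

/-- For `0 ≤ r`, the vector from the nearest point of `closedBall 0 r` to `p`. -/
noncomputable def ballResidual (r : ℝ) (p : E) : E := (max (‖p‖ - r) 0 / ‖p‖) • p

lemma norm_ballResidual (hr : 0 ≤ r) (p : E) : ‖ballResidual r p‖ = max (‖p‖ - r) 0 := by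
  rw [ballResidual, norm_smul, Real.norm_of_nonneg (div_nonneg (le_max_right _ _) (norm_nonneg p)),
    max_sub_zero_div_mul_self hr (norm_nonneg p)]

lemma norm_ballResidual_sub_le (hr : 0 ≤ r) (p q : E) :
    ‖ballResidual r p - ballResidual r q‖ ≤ ‖p - q‖ := by
  have hm : (max (‖p‖ - r) 0 - max (‖q‖ - r) 0) ^ 2 ≤ (‖p‖ - ‖q‖) ^ 2 := by
    simpa using sq_le_sq.2 (abs_max_sub_max_le_abs (‖p‖ - r) (‖q‖ - r) 0)
  have ha := max_sub_zero_div_self_mem_Icc hr (norm_nonneg p)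
  have hb := max_sub_zero_div_self_mem_Icc hr (norm_nonneg q)
  have hprod : max (‖p‖ - r) 0 / ‖p‖ * (max (‖q‖ - r) 0 / ‖q‖) * (‖p‖ * ‖q‖)
      = max (‖p‖ - r) 0 * max (‖q‖ - r) 0 := by
    rw [mul_mul_mul_comm, max_sub_zero_div_mul_self hr (norm_nonneg p),
      max_sub_zero_div_mul_self hr (norm_nonneg q)]
  have hab : 0 ≤ 1 - max (‖p‖ - r) 0 / ‖p‖ * (max (‖q‖ - r) 0 / ‖q‖) := by
    nlinarith [ha.1, ha.2, hb.1, hb.2]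
  have hsq : ‖ballResidual r p - ballResidual r q‖ ^ 2 ≤ ‖p - q‖ ^ 2 := by
    rw [norm_sub_sq_real, norm_sub_sq_real, norm_ballResidual hr, norm_ballResidual hr,
      ballResidual, ballResidual, real_inner_smul_left, real_inner_smul_right]
    nlinarith [mul_le_mul_of_nonneg_left (real_inner_le_norm p q) hab]
  exact (sq_le_sq₀ (norm_nonneg _) (norm_nonneg _)).1 hsq

lemma sq_sub_add_le_bregman_ballResidual (hr : 0 ≤ r) (p q : E) :
    (max (‖q‖ - r) 0 - max (‖p‖ - r) 0) ^ 2
        + 2 * (max (‖p‖ - r) 0 / ‖p‖) * (‖p‖ * ‖q‖ - ⟪p, q⟫)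
      ≤ ‖ballResidual r q‖ ^ 2 - ‖ballResidual r p‖ ^ 2 - 2 * ⟪ballResidual r p, q - p⟫ := by
  rw [norm_ballResidual hr, norm_ballResidual hr, ballResidual, real_inner_smul_left,
    inner_sub_right, real_inner_self_eq_norm_sq]
  have hpa := max_sub_zero_div_mul_self hr (norm_nonneg p)
  have hmp : max (‖p‖ - r) 0 * (max (‖p‖ - r) 0 - (‖p‖ - r)) = 0 := by
    rcases le_total (‖p‖ - r) 0 with h | h
    · rw [max_eq_right h, zero_mul]
    · rw [max_eq_left h, sub_self, mul_zero]
  nlinarith [congrArg (· * ‖p‖) hpa, congrArg (· * ‖q‖) hpa, mul_nonneg (le_max_right (‖p‖ - r) 0)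
    (by linarith [le_max_left (‖q‖ - r) 0] : 0 ≤ max (‖q‖ - r) 0 - (‖q‖ - r))]

lemma bregman_ballResidual_nonneg (hr : 0 ≤ r) (p q : E) :
    0 ≤ ‖ballResidual r q‖ ^ 2 - ‖ballResidual r p‖ ^ 2 - 2 * ⟪ballResidual r p, q - p⟫ := by
  refine le_trans ?_ (sq_sub_add_le_bregman_ballResidual hr p q)
  have := (max_sub_zero_div_self_mem_Icc hr (norm_nonneg p)).1
  have := real_inner_le_norm p q
  positivity

lemma mul_norm_sub_sq_le_bregman_ballResidual (hr : 0 ≤ r) {p q : E}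
    (hM : 2 * r ≤ max ‖p‖ ‖q‖) :
    (max ‖p‖ ‖q‖ - 2 * r) * ‖q - p‖ ^ 2 ≤ 2 * (max ‖p‖ ‖q‖ + r)
      * (‖ballResidual r q‖ ^ 2 - ‖ballResidual r p‖ ^ 2 - 2 * ⟪ballResidual r p, q - p⟫) := by
  have hV : ‖q - p‖ ^ 2 = (‖q‖ - ‖p‖) ^ 2 + 2 * (‖p‖ * ‖q‖ - ⟪p, q⟫) := by
    rw [norm_sub_sq_real, real_inner_comm]; ring
  have hpq := abs_le.1 (abs_real_inner_le_norm p q)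
  rw [hV]
  refine (mul_sq_add_le_of_two_mul_le_max hr (norm_nonneg p) (norm_nonneg q)
    (by linarith) (by linarith) hM).trans ?_
  gcongr
  exact sq_sub_add_le_bregman_ballResidual hr p q

end

theorem stmt_6_general {d : ℕ} (f : EuclideanSpace ℝ (Fin d) → ℝ)
    (f' : EuclideanSpace ℝ (Fin d) → EuclideanSpace ℝ (Fin d))
    (f'' : EuclideanSpace ℝ (Fin d) → EuclideanSpace ℝ (Fin d) →L[ℝ] EuclideanSpace ℝ (Fin d))
    (L₁ L₂ α : ℝ) (hL₁ : 0 < L₁) (hL₂ : 0 < L₂) (hα : 0 ≤ α)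
    (hgrad : ∀ x, HasGradientAt f (f' x) x)
    (hgradlip : ∀ x y, ‖f' x - f' y‖ ≤ L₁ * ‖x - y‖)
    (hhess : ∀ x, HasFDerivAt f' (f'' x) x)
    (hhesslip : ∀ x y, ‖f'' x - f'' y‖ ≤ L₂ * ‖x - y‖)
    (x₀ : EuclideanSpace ℝ (Fin d))
    (hpsd : ∀ v, ⟪v, f'' x₀ v⟫ ≥ -α * ‖v‖ ^ 2)
    (fα : EuclideanSpace ℝ (Fin d) → ℝ)
    (hfα : ∀ x, fα x = f x + L₁ * max (‖x - x₀‖ - α / L₂) 0 ^ 2)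
    (fα' : EuclideanSpace ℝ (Fin d) → EuclideanSpace ℝ (Fin d))
    (hfα' : ∀ x, fα' x =
      f' x + (2 * L₁ * max (‖x - x₀‖ - α / L₂) 0 / ‖x - x₀‖) • (x - x₀)) :
    (∀ x y, fα y - fα x - ⟪fα' x, y - x⟫ ≥ -(3 * α / 2) * ‖y - x‖ ^ 2) ∧
      ∀ x y, ‖fα' x - fα' y‖ ≤ 5 * L₁ * ‖x - y‖ := by
  set r := α / L₂
  have hr : 0 ≤ r := div_nonneg hα hL₂.le
  have hfα_eq : ∀ x, fα x = f x + L₁ * ‖ballResidual r (x - x₀)‖ ^ 2 := fun x => by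
    rw [norm_ballResidual hr, hfα]
  have hfα'_eq : ∀ x, fα' x = f' x + (2 * L₁) • ballResidual r (x - x₀) := fun x => by
    rw [hfα', ballResidual, smul_smul, mul_div_assoc]
  refine ⟨fun x y => ?_, fun x y => ?_⟩
  · have hf := neg_half_min_mul_sq_le_sub_sub_inner hL₁.le hL₂.le hgrad hgradlip hhess hhesslip
      hpsd x y
    have hpen := min_mul_le_of_bregman_ge hL₁.le hL₂.le hr (mul_div_cancel₀ α hL₂.ne').symm
      (le_max_of_le_left (norm_nonneg _)) (sq_nonneg _)
      (bregman_ballResidual_nonneg hr (x - x₀) (y - x₀))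
      (mul_norm_sub_sq_le_bregman_ballResidual (p := x - x₀) (q := y - x₀) hr)
    rw [sub_sub_sub_cancel_right] at hpen
    rw [hfα_eq, hfα_eq, hfα'_eq, inner_add_left, real_inner_smul_left]
    linarith
  · calc ‖fα' x - fα' y‖
        = ‖(f' x - f' y) + (2 * L₁) • (ballResidual r (x - x₀) - ballResidual r (y - x₀))‖ := by
          rw [hfα'_eq, hfα'_eq, smul_sub, add_sub_add_comm]
      _ ≤ L₁ * ‖x - y‖ + 2 * L₁ * ‖x - y‖ := by
          refine (norm_add_le _ _).trans (add_le_add (hgradlip x y) ?_)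
          rw [norm_smul, Real.norm_of_nonneg (by positivity)]
          gcongr
          simpa only [sub_sub_sub_cancel_right] using norm_ballResidual_sub_le hr (x - x₀) (y - x₀)
      _ ≤ 5 * L₁ * ‖x - y‖ := by nlinarith [norm_nonneg (x - y)]

/-- If `f` is `L₁`-smooth with `L₂`-Lipschitz Hessian and `∇²f(x₀) ⪰ -α I`, then
`f_α x = f x + L₁ (max (‖x - x₀‖ - α/L₂) 0)²` is `3α`-almost convex and its gradient
is `5 L₁`-Lipschitz. -/
theorem stmt_6 {d : ℕ} (f : EuclideanSpace ℝ (Fin d) → ℝ)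
    (f' : EuclideanSpace ℝ (Fin d) → EuclideanSpace ℝ (Fin d))
    (f'' : EuclideanSpace ℝ (Fin d) → EuclideanSpace ℝ (Fin d) →L[ℝ] EuclideanSpace ℝ (Fin d))
    (L₁ L₂ α : ℝ) (hL₁ : 0 < L₁) (hL₂ : 0 < L₂) (hα : 0 ≤ α)
    (hgrad : ∀ x, HasGradientAt f (f' x) x)
    (hgradlip : ∀ x y, ‖f' x - f' y‖ ≤ L₁ * ‖x - y‖)
    (hhess : ∀ x, HasFDerivAt f' (f'' x) x)
    (hhesscont : Continuous f'')
    (hhesslip : ∀ x y, ‖f'' x - f'' y‖ ≤ L₂ * ‖x - y‖)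
    (x₀ : EuclideanSpace ℝ (Fin d))
    (hpsd : ∀ v, ⟪v, f'' x₀ v⟫ ≥ -α * ‖v‖ ^ 2)
    (fα : EuclideanSpace ℝ (Fin d) → ℝ)
    (hfα : ∀ x, fα x = f x + L₁ * max (‖x - x₀‖ - α / L₂) 0 ^ 2)
    (fα' : EuclideanSpace ℝ (Fin d) → EuclideanSpace ℝ (Fin d))
    (hfα' : ∀ x, fα' x =
      f' x + (2 * L₁ * max (‖x - x₀‖ - α / L₂) 0 / ‖x - x₀‖) • (x - x₀)) :
    (∀ x y, fα y - fα x - ⟪fα' x, y - x⟫ ≥ -(3 * α / 2) * ‖y - x‖ ^ 2) ∧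
      ∀ x y, ‖fα' x - fα' y‖ ≤ 5 * L₁ * ‖x - y‖ :=
  stmt_6_general f f' f'' L₁ L₂ α hL₁ hL₂ hα hgrad hgradlip hhess hhesslip x₀ hpsd fα hfα fα' hfα'
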